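/- Let n ≥ n_0 ≥ 0 and let u ∈ R^∞_+ be α-moderate from n_0 onwards. Suppose ‖w_k − w*‖ ≤ u_k for all n_0 ≤ k ≤ n. Then, with T_{n+1} := Σ_{k=n_0+1}^n (∏_{j=k+1}^n (I − α_j X_1)) [(α_k/β_k) I − (α_{k−1}/β_{k−1})(I − α_k X_1)] W_1 W_2^{-1} (w_k − w*), it holds that ‖T_{n+1}‖ ≤ (2e^{q_1/2}/q_1) C_U ‖W_1 W_2^{-1}‖ C_θ (α_n/β_n) u_n, where C_U = ‖X_1‖ + 2(α−β)(1+‖X_1‖) and C_θ is the explicit constant from the product bound ∏_{k=i}^n ‖I − α_k X_1‖ ≤ C_θ e^{−q_1 Σ_{k=i}^n α_k}. -/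

import Mathlib

open Matrix
open scoped RealInnerProductSpace BigOperators

noncomputable section

abbrev E (d : ℕ) := EuclideanSpace ℝ (Fin d)

variable {d : ℕ}

/-- Apply a matrix to a vector of Euclidean space. -/
def app (A : Matrix (Fin d) (Fin d) ℝ) (x : E d) : E d :=
  Matrix.toEuclideanCLM (𝕜 := ℝ) A x

/-- The spectral (operator `2`-) norm of a matrix. -/
def opNorm (A : Matrix (Fin d) (Fin d) ℝ) : ℝ :=
  ‖Matrix.toEuclideanCLM (𝕜 := ℝ) A‖

/-- Positive definiteness (not necessarily symmetric): `⟪x, A x⟫ > 0` for `x ≠ 0`. -/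
def PosDefNS (A : Matrix (Fin d) (Fin d) ℝ) : Prop :=
  ∀ x : E d, x ≠ 0 → 0 < ⟪x, app A x⟫

/-- Smallest eigenvalue of a symmetric matrix (Rayleigh infimum over the unit sphere). -/
def lambdaMin (A : Matrix (Fin d) (Fin d) ℝ) : ℝ :=
  ⨅ x : Metric.sphere (0 : E d) 1, ⟪(x : E d), app A (x : E d)⟫

/-- Stepsizes `(n+1)^{-a}`. -/
def steps (a : ℝ) (n : ℕ) : ℝ := ((n : ℝ) + 1) ^ (-a)

/-- The (ordered) matrix product `∏_{j=a}^{b} (I − c_j X)` (equal to `1` if `b < a`). -/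
def Mprod (X : Matrix (Fin d) (Fin d) ℝ) (c : ℕ → ℝ) (a b : ℕ) :
    Matrix (Fin d) (Fin d) ℝ :=
  ((List.range' a (b + 1 - a)).map fun j => (1 : Matrix (Fin d) (Fin d) ℝ) - c j • X).prod

/-- A positive sequence `u` is `α`-moderate (parameters `α, β, q₁`) from `k₀` onwards if
`u_k / u_{k+1} ≤ (α_{k+1}/α_k)(β_k/β_{k+1}) e^{(q₁/2) α_{k+1}}` for all `k ≥ k₀`. -/
def AlphaModerateFrom (α β q1 : ℝ) (u : ℕ → ℝ) (k0 : ℕ) : Prop :=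
  ∀ k : ℕ, k0 ≤ k →
    u k / u (k + 1) ≤
      (steps α (k + 1) / steps α k) * (steps β k / steps β (k + 1)) *
        Real.exp (q1 / 2 * steps α (k + 1))

/-!
Write `r_k = α_k / β_k = (k+1)^{-(α-β)}` and `S_k = Σ_{j=k+1}^n α_j`. The bracket of the `k`-th
summand is `(r_k - r_{k-1}) I + r_{k-1} α_k X₁`, and Bernoulli's inequality gives
`r_{k-1} - r_k ≤ 2(α-β) r_k α_k`, so its norm is at most `C_U r_k α_k`. The product in front has
norm at most `C_θ e^{-q₁ S_k}` (for `k = n` it is `I`, and `C_θ ≥ 1` follows from the product bound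
with `i = n → ∞`). Moderateness of `u` propagates to `r_k u_k ≤ r_n u_n e^{(q₁/2) S_k}`, so half
of the exponential decay survives, and
`α_k e^{-(q₁/2) S_k} ≤ (2e^{q₁/2}/q₁)(e^{-(q₁/2) S_k} - e^{-(q₁/2) S_{k-1}})`
makes the sum telescope to at most `2e^{q₁/2}/q₁`.
-/

lemma opNorm_nonneg (A : Matrix (Fin d) (Fin d) ℝ) : 0 ≤ opNorm A := norm_nonneg _

lemma norm_app_le (A : Matrix (Fin d) (Fin d) ℝ) (x : E d) : ‖app A x‖ ≤ opNorm A * ‖x‖ :=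
  ContinuousLinearMap.le_opNorm _ _

lemma opNorm_mul_le (A B : Matrix (Fin d) (Fin d) ℝ) : opNorm (A * B) ≤ opNorm A * opNorm B := by
  unfold opNorm
  rw [map_mul]
  exact norm_mul_le _ _

lemma opNorm_add_le (A B : Matrix (Fin d) (Fin d) ℝ) : opNorm (A + B) ≤ opNorm A + opNorm B := by
  unfold opNorm
  rw [map_add]
  exact norm_add_le _ _

lemma opNorm_sub_opNorm_le (A B : Matrix (Fin d) (Fin d) ℝ) :
    opNorm A - opNorm B ≤ opNorm (A - B) := by
  unfold opNorm
  rw [map_sub]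
  exact norm_sub_norm_le _ _

lemma opNorm_smul (c : ℝ) (A : Matrix (Fin d) (Fin d) ℝ) : opNorm (c • A) = |c| * opNorm A := by
  unfold opNorm
  rw [map_smul, norm_smul, Real.norm_eq_abs]

lemma opNorm_one (hd : 0 < d) : opNorm (1 : Matrix (Fin d) (Fin d) ℝ) = 1 := by
  have : Nonempty (Fin d) := Fin.pos_iff_nonempty.mp hd
  unfold opNorm
  rw [map_one, norm_one]

lemma app_add (A B : Matrix (Fin d) (Fin d) ℝ) (x : E d) : app (A + B) x = app A x + app B x := by
  unfold app
  rw [map_add]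
  rfl

lemma inner_app_transpose (A : Matrix (Fin d) (Fin d) ℝ) (x : E d) :
    ⟪x, app Aᵀ x⟫ = ⟪x, app A x⟫ := by
  rw [← Matrix.conjTranspose_eq_transpose_of_trivial, app, ← star_eq_conjTranspose, map_star,
    ContinuousLinearMap.star_eq_adjoint, ContinuousLinearMap.adjoint_inner_right,
    real_inner_comm, app]

lemma PosDefNS.add_transpose {A : Matrix (Fin d) (Fin d) ℝ} (hA : PosDefNS A) :
    PosDefNS (A + Aᵀ) := fun x hx => by
  rw [app_add, inner_add_right, inner_app_transpose]
  linarith [hA x hx]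

lemma PosDefNS.lambdaMin_pos (hd : 0 < d) {A : Matrix (Fin d) (Fin d) ℝ} (hA : PosDefNS A) :
    0 < lambdaMin A := by
  have : Nonempty (Fin d) := Fin.pos_iff_nonempty.mp hd
  have hsphere : (Metric.sphere (0 : E d) 1).Nonempty :=
    NormedSpace.sphere_nonempty.mpr zero_le_one
  have hcont : Continuous fun x : E d => ⟪x, app A x⟫ :=
    continuous_id.inner (Matrix.toEuclideanCLM (𝕜 := ℝ) A).continuous
  obtain ⟨x₀, hx₀, hmin⟩ :=
    (isCompact_sphere (0 : E d) 1).exists_isMinOn hsphere hcont.continuousOn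
  have hx₀ne : x₀ ≠ 0 := ne_zero_of_mem_unit_sphere ⟨x₀, hx₀⟩
  have : Nonempty (Metric.sphere (0 : E d) 1) := hsphere.to_subtype
  exact (hA x₀ hx₀ne).trans_le (le_ciInf fun y => hmin y.2)

lemma Mprod_self_succ (X : Matrix (Fin d) (Fin d) ℝ) (c : ℕ → ℝ) (b : ℕ) :
    Mprod X c (b + 1) b = 1 := by
  simp [Mprod]

lemma opNorm_Mprod_le (X : Matrix (Fin d) (Fin d) ℝ) (c : ℕ → ℝ) {a b : ℕ} (hab : a ≤ b) :
    opNorm (Mprod X c a b) ≤ ∏ k ∈ Finset.Icc a b, opNorm (1 - c k • X) := by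
  have hne : (List.range' a (b + 1 - a)).map (fun j => Matrix.toEuclideanCLM (𝕜 := ℝ)
      ((1 : Matrix (Fin d) (Fin d) ℝ) - c j • X)) ≠ [] := by
    simp only [ne_eq, List.map_eq_nil_iff, List.range'_eq_nil_iff]
    omega
  unfold opNorm Mprod
  rw [map_list_prod, List.map_map]
  refine (List.norm_prod_le' hne).trans_eq ?_
  rw [Nat.Icc_eq_range', Finset.prod_eq_multiset_prod, Multiset.map_coe, Multiset.prod_coe,
    List.map_map]
  rfl

lemma one_le_of_opNorm_one_sub_smul_le (hd : 0 < d) (X : Matrix (Fin d) (Fin d) ℝ) {c : ℕ → ℝ}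
    (hc : Filter.Tendsto c Filter.atTop (nhds 0)) {q C : ℝ}
    (h : ∀ k, opNorm (1 - c k • X) ≤ C * Real.exp (-q * c k)) : 1 ≤ C := by
  have hlower : ∀ k, (1 - |c k| * opNorm X) * Real.exp (q * c k) ≤ C := fun k => by
    have hsub := opNorm_sub_opNorm_le 1 (c k • X)
    rw [opNorm_one hd, opNorm_smul] at hsub
    calc (1 - |c k| * opNorm X) * Real.exp (q * c k)
        ≤ C * Real.exp (-q * c k) * Real.exp (q * c k) := by gcongr; exact hsub.trans (h k)
      _ = C := by rw [mul_assoc, ← Real.exp_add]; simp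
  have hcont : Continuous fun s : ℝ => (1 - |s| * opNorm X) * Real.exp (q * s) := by fun_prop
  refine le_of_tendsto' (x := Filter.atTop) ?_ hlower
  simpa [Function.comp_def] using (hcont.tendsto 0).comp hc

lemma opNorm_Mprod_succ_le (hd : 0 < d) (X : Matrix (Fin d) (Fin d) ℝ) {c : ℕ → ℝ} {q C : ℝ}
    (hC1 : 1 ≤ C)
    (hC : ∀ i n : ℕ, i ≤ n →
      ∏ k ∈ Finset.Icc i n, opNorm (1 - c k • X) ≤ C * Real.exp (-q * ∑ k ∈ Finset.Icc i n, c k))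
    {k n : ℕ} (hkn : k ≤ n) :
    opNorm (Mprod X c (k + 1) n) ≤ C * Real.exp (-q * ∑ j ∈ Finset.Icc (k + 1) n, c j) := by
  rcases hkn.lt_or_eq with hlt | rfl
  · exact (opNorm_Mprod_le X c hlt).trans (hC _ _ hlt)
  · simpa [Mprod_self_succ, opNorm_one hd] using hC1

lemma steps_pos (a : ℝ) (n : ℕ) : 0 < steps a n := Real.rpow_pos_of_pos (by positivity) _

lemma steps_le_one {a : ℝ} (ha : 0 ≤ a) (n : ℕ) : steps a n ≤ 1 :=
  Real.rpow_le_one_of_one_le_of_nonpos (by simp) (neg_nonpos.mpr ha)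

lemma steps_succ_le {a : ℝ} (ha : 0 ≤ a) (n : ℕ) : steps a (n + 1) ≤ steps a n := by
  unfold steps
  exact Real.rpow_le_rpow_of_nonpos (by positivity) (by push_cast; linarith) (neg_nonpos.mpr ha)

lemma tendsto_steps_atTop {a : ℝ} (ha : 0 < a) :
    Filter.Tendsto (steps a) Filter.atTop (nhds 0) :=
  (tendsto_rpow_neg_atTop ha).comp
    (Filter.tendsto_atTop_add_const_right _ 1 tendsto_natCast_atTop_atTop)

lemma steps_div_steps (a b : ℝ) (n : ℕ) : steps a n / steps b n = steps (a - b) n := by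
  unfold steps
  rw [← Real.rpow_sub (by positivity)]
  ring_nf

lemma rpow_neg_le_one_add_div_mul {x γ : ℝ} (hx : 0 < x) (hγ0 : 0 ≤ γ) (hγ1 : γ ≤ 1) :
    x ^ (-γ) ≤ (1 + γ / x) * (x + 1) ^ (-γ) := by
  have hbernoulli : ((x + 1) / x) ^ γ ≤ 1 + γ / x := by
    have h := rpow_one_add_le_one_add_mul_self (s := 1 / x) (by linarith [one_div_pos.mpr hx])
      hγ0 hγ1
    rwa [one_add_div hx.ne', mul_one_div] at h
  have hsplit : x ^ (-γ) = ((x + 1) / x) ^ γ * (x + 1) ^ (-γ) := by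
    have := (Real.rpow_pos_of_pos (by linarith : 0 < x + 1) γ).ne'
    rw [Real.div_rpow (by linarith) hx.le, Real.rpow_neg hx.le, Real.rpow_neg (by linarith)]
    field_simp
  rw [hsplit]
  gcongr

lemma steps_sub_steps_succ_le {γ a : ℝ} (hγ0 : 0 ≤ γ) (hγ1 : γ ≤ 1) (ha : a ≤ 1) (m : ℕ) :
    steps γ m - steps γ (m + 1) ≤ 2 * γ * steps γ (m + 1) * steps a (m + 1) := by
  have hx : (0 : ℝ) < m + 1 := by positivity
  have hpow : ((m : ℝ) + 1 + 1) ^ a ≤ 2 * ((m : ℝ) + 1) :=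
    calc ((m : ℝ) + 1 + 1) ^ a ≤ ((m : ℝ) + 1 + 1) ^ (1 : ℝ) :=
          Real.rpow_le_rpow_of_exponent_le (by linarith) ha
      _ ≤ 2 * ((m : ℝ) + 1) := by rw [Real.rpow_one]; linarith
  have hinv : 1 / ((m : ℝ) + 1) ≤ 2 * steps a (m + 1) :=
    calc 1 / ((m : ℝ) + 1) = 2 * (2 * ((m : ℝ) + 1))⁻¹ := by field_simp
      _ ≤ 2 * (((m : ℝ) + 1 + 1) ^ a)⁻¹ := by gcongr
      _ = 2 * steps a (m + 1) := by
          rw [steps, ← Real.rpow_neg (by positivity)]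
          push_cast
          rfl
  have hbernoulli := rpow_neg_le_one_add_div_mul hx hγ0 hγ1
  have hr := steps_pos γ (m + 1)
  simp only [steps, Nat.cast_add, Nat.cast_one] at hbernoulli hinv hr ⊢
  rw [div_eq_mul_one_div γ] at hbernoulli
  nlinarith [mul_le_mul_of_nonneg_left hinv (mul_nonneg hγ0 hr.le)]

lemma opNorm_smul_one_sub_smul_le (hd : 0 < d) (X : Matrix (Fin d) (Fin d) ℝ) {r r' s : ℝ}
    (hrr' : r ≤ r') (hr' : 0 ≤ r') (hs : 0 ≤ s) :
    opNorm (r • (1 : Matrix (Fin d) (Fin d) ℝ) - r' • (1 - s • X)) ≤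
      r' - r + r' * s * opNorm X := by
  have hsplit :
      r • (1 : Matrix (Fin d) (Fin d) ℝ) - r' • (1 - s • X) = (r - r') • 1 + (r' * s) • X := by
    rw [smul_sub, smul_smul, sub_smul]
    abel
  rw [hsplit]
  refine (opNorm_add_le _ _).trans_eq ?_
  rw [opNorm_smul, opNorm_smul, opNorm_one hd, abs_of_nonpos (sub_nonpos.mpr hrr'),
    abs_of_nonneg (mul_nonneg hr' hs)]
  ring

lemma opNorm_stepRatio_sub_le (hd : 0 < d) (X : Matrix (Fin d) (Fin d) ℝ) {α β : ℝ}
    (hβ : 0 ≤ β) (hβα : β ≤ α) (hα : α ≤ 1) (m : ℕ) :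
    opNorm ((steps α (m + 1) / steps β (m + 1)) • (1 : Matrix (Fin d) (Fin d) ℝ) -
        (steps α m / steps β m) • (1 - steps α (m + 1) • X)) ≤
      (opNorm X + 2 * (α - β) * (1 + opNorm X)) * (steps α (m + 1) / steps β (m + 1)) *
        steps α (m + 1) := by
  simp only [steps_div_steps]
  have hdiff := steps_sub_steps_succ_le (sub_nonneg.mpr hβα) (by linarith) hα m
  have hr := steps_pos (α - β) (m + 1)
  have hs := steps_pos α (m + 1)
  have hs1 := steps_le_one (hβ.trans hβα) (m + 1)
  have hX := opNorm_nonneg X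
  refine (opNorm_smul_one_sub_smul_le hd X (steps_succ_le (sub_nonneg.mpr hβα) m)
    (steps_pos _ _).le hs.le).trans ?_
  nlinarith [mul_le_mul_of_nonneg_right hdiff (mul_nonneg hs.le hX),
    mul_nonneg (mul_nonneg (mul_nonneg (sub_nonneg.mpr hβα) hr.le) (mul_nonneg hs.le hX))
      (sub_nonneg.mpr hs1)]

lemma AlphaModerateFrom.ratio_mul_le {α β q : ℝ} {u : ℕ → ℝ} {n0 : ℕ}
    (hmod : AlphaModerateFrom α β q u n0) (hu : ∀ k, 0 < u k) {m N : ℕ} (hm : n0 ≤ m)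
    (hmN : m ≤ N) :
    steps α m / steps β m * u m ≤
      steps α N / steps β N * u N * Real.exp (q / 2 * ∑ j ∈ Finset.Icc (m + 1) N, steps α j) := by
  induction N, hmN using Nat.le_induction with
  | base => simp
  | succ N hmN ih =>
    have hstep : steps α N / steps β N * u N ≤
        steps α (N + 1) / steps β (N + 1) * u (N + 1) * Real.exp (q / 2 * steps α (N + 1)) := by
      have h := hmod N (hm.trans hmN)
      rw [div_le_iff₀ (hu (N + 1))] at h
      have := steps_pos α N
      have := steps_pos β N
      have := steps_pos α (N + 1)
      have := steps_pos β (N + 1)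
      calc steps α N / steps β N * u N
          ≤ steps α N / steps β N * (steps α (N + 1) / steps α N * (steps β N / steps β (N + 1)) *
              Real.exp (q / 2 * steps α (N + 1)) * u (N + 1)) := by gcongr
        _ = _ := by field_simp
    rw [Finset.sum_Icc_succ_top (by omega), mul_add, Real.exp_add]
    calc _ ≤ _ := ih
      _ ≤ _ := mul_le_mul_of_nonneg_right hstep (Real.exp_pos _).le
      _ = _ := by ring

lemma le_exp_div_mul_one_sub_exp_neg {c x : ℝ} (hc : 0 < c) (hx0 : 0 ≤ x) (hx1 : x ≤ 1) :
    x ≤ Real.exp c / c * (1 - Real.exp (-(c * x))) := by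
  have hmul : c * x * Real.exp (-(c * x)) ≤ 1 - Real.exp (-(c * x)) := by
    have hinv : Real.exp (-(c * x)) * Real.exp (c * x) = 1 := by rw [← Real.exp_add]; simp
    nlinarith [mul_le_mul_of_nonneg_left (Real.add_one_le_exp (c * x)) (Real.exp_pos (-(c * x))).le]
  have hge : 1 ≤ Real.exp c * Real.exp (-(c * x)) := by
    rw [← Real.exp_add]
    exact Real.one_le_exp (by nlinarith)
  calc x ≤ x * (Real.exp c * Real.exp (-(c * x))) := le_mul_of_one_le_right hx0 hge
    _ = Real.exp c / c * (c * x * Real.exp (-(c * x))) := by field_simp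
    _ ≤ _ := by gcongr

def expTail (a c : ℝ) (n k : ℕ) : ℝ := Real.exp (-(c * ∑ j ∈ Finset.Icc (k + 1) n, steps a j))

lemma expTail_self (a c : ℝ) (n : ℕ) : expTail a c n n = 1 := by
  simp [expTail]

lemma expTail_pos (a c : ℝ) (n k : ℕ) : 0 < expTail a c n k := Real.exp_pos _

lemma expTail_eq_mul_expTail_succ (a c : ℝ) {m n : ℕ} (hmn : m + 1 ≤ n) :
    expTail a c n m = Real.exp (-(c * steps a (m + 1))) * expTail a c n (m + 1) := by
  rw [expTail, expTail, ← Real.exp_add, Finset.Icc_eq_cons_Ioc hmn, Finset.sum_cons,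
    ← Finset.Icc_add_one_left_eq_Ioc]
  ring_nf

lemma steps_mul_expTail_le {a c : ℝ} (ha : 0 ≤ a) (hc : 0 < c) {m n : ℕ} (hmn : m + 1 ≤ n) :
    steps a (m + 1) * expTail a c n (m + 1) ≤
      Real.exp c / c * (expTail a c n (m + 1) - expTail a c n m) := by
  have h := le_exp_div_mul_one_sub_exp_neg hc (steps_pos a (m + 1)).le (steps_le_one ha (m + 1))
  rw [expTail_eq_mul_expTail_succ a c hmn]
  calc steps a (m + 1) * expTail a c n (m + 1)
      ≤ Real.exp c / c * (1 - Real.exp (-(c * steps a (m + 1)))) * expTail a c n (m + 1) := by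
        gcongr
        exact (expTail_pos a c n _).le
    _ = _ := by ring

lemma sum_Icc_sub_pred {M : Type*} [AddCommGroup M] (f : ℕ → M) {a b : ℕ} (hab : a ≤ b) :
    ∑ k ∈ Finset.Icc (a + 1) b, (f k - f (k - 1)) = f b - f a := by
  induction b, hab using Nat.le_induction with
  | base => simp
  | succ b hab ih =>
    rw [Finset.sum_Icc_succ_top (by omega), ih, Nat.add_sub_cancel]
    abel

lemma norm_app_summand_le (hd : 0 < d) (X M : Matrix (Fin d) (Fin d) ℝ) {α β q C : ℝ}
    (hβ : 0 ≤ β) (hβα : β ≤ α) (hα : α ≤ 1) (hq : 0 < q) (hC1 : 1 ≤ C)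
    (hC : ∀ i n : ℕ, i ≤ n →
      ∏ k ∈ Finset.Icc i n, opNorm (1 - steps α k • X) ≤
        C * Real.exp (-q * ∑ k ∈ Finset.Icc i n, steps α k))
    {u : ℕ → ℝ} (hu : ∀ k, 0 < u k) {n0 : ℕ} (hmod : AlphaModerateFrom α β q u n0)
    {m n : ℕ} (hm : n0 ≤ m) (hmn : m + 1 ≤ n) {v : E d} (hv : ‖v‖ ≤ u (m + 1)) :
    ‖app (Mprod X (steps α) (m + 1 + 1) n *
          ((steps α (m + 1) / steps β (m + 1)) • (1 : Matrix (Fin d) (Fin d) ℝ) -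
            (steps α m / steps β m) • (1 - steps α (m + 1) • X)) * M) v‖ ≤
      2 * Real.exp (q / 2) / q * (opNorm X + 2 * (α - β) * (1 + opNorm X)) * opNorm M * C *
        (steps α n / steps β n) * u n * (expTail α (q / 2) n (m + 1) - expTail α (q / 2) n m) := by
  have hMprod := opNorm_Mprod_succ_le hd X hC1 hC hmn
  have hΘ := opNorm_stepRatio_sub_le hd X hβ hβα hα m
  have hratio := hmod.ratio_mul_le hu (by omega : n0 ≤ m + 1) hmn
  have htail := steps_mul_expTail_le (hβ.trans hβα) (half_pos hq) hmn
  set S := ∑ j ∈ Finset.Icc (m + 1 + 1) n, steps α j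
  set CU := opNorm X + 2 * (α - β) * (1 + opNorm X)
  set P := Mprod X (steps α) (m + 1 + 1) n
  set Θ := (steps α (m + 1) / steps β (m + 1)) • (1 : Matrix (Fin d) (Fin d) ℝ) -
    (steps α m / steps β m) • (1 - steps α (m + 1) • X)
  have hCU : 0 ≤ CU := by
    have := opNorm_nonneg X
    have : 0 ≤ α - β := sub_nonneg.mpr hβα
    positivity
  have hPΘM : opNorm (P * Θ * M) ≤ opNorm P * opNorm Θ * opNorm M :=
    (opNorm_mul_le _ _).trans (mul_le_mul_of_nonneg_right (opNorm_mul_le _ _) (opNorm_nonneg _))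
  have := opNorm_nonneg M
  have := opNorm_nonneg Θ
  have := steps_pos α (m + 1)
  have := steps_pos β (m + 1)
  have := steps_pos α n
  have := steps_pos β n
  have := hu n
  have := hu (m + 1)
  calc _ ≤ opNorm P * opNorm Θ * opNorm M * u (m + 1) :=
        (norm_app_le _ _).trans (mul_le_mul hPΘM hv (norm_nonneg _) ((opNorm_nonneg _).trans hPΘM))
    _ ≤ C * Real.exp (-q * S) * (CU * (steps α (m + 1) / steps β (m + 1)) * steps α (m + 1)) *
          opNorm M * u (m + 1) := by
        gcongr
    _ = C * CU * opNorm M * steps α (m + 1) * Real.exp (-q * S) *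
          (steps α (m + 1) / steps β (m + 1) * u (m + 1)) := by ring
    _ ≤ C * CU * opNorm M * steps α (m + 1) * Real.exp (-q * S) *
          (steps α n / steps β n * u n * Real.exp (q / 2 * S)) := by gcongr
    _ = C * CU * opNorm M * (steps α n / steps β n * u n) *
          (steps α (m + 1) * expTail α (q / 2) n (m + 1)) := by
        have hexp : Real.exp (-q * S) * Real.exp (q / 2 * S) = expTail α (q / 2) n (m + 1) := by
          rw [← Real.exp_add]
          show _ = Real.exp (-(q / 2 * S))
          ring_nf
        rw [← hexp]
        ring
    _ ≤ C * CU * opNorm M * (steps α n / steps β n * u n) *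
          (Real.exp (q / 2) / (q / 2) * (expTail α (q / 2) n (m + 1) - expTail α (q / 2) n m)) := by
        gcongr
    _ = _ := by field_simp

theorem stmt13_general {d : ℕ} (hd : 0 < d)
    (X1 W1 W2 : Matrix (Fin d) (Fin d) ℝ)
    (hX1 : PosDefNS X1)
    (α β : ℝ) (hβ : 0 < β) (hβα : β < α) (hα : α < 1)
    (q1 : ℝ) (hq1 : q1 = lambdaMin (X1 + X1ᵀ) / 4)
    (Cθ : ℝ)
    (hCθ : ∀ i n : ℕ, i ≤ n →
      ∏ k ∈ Finset.Icc i n, opNorm (1 - steps α k • X1) ≤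
        Cθ * Real.exp (-q1 * ∑ k ∈ Finset.Icc i n, steps α k))
    (w : ℕ → E d) (wstar : E d)
    (u : ℕ → ℝ) (hupos : ∀ k, 0 < u k)
    (n0 n : ℕ) (hn : n0 ≤ n)
    (hmod : AlphaModerateFrom α β q1 u n0)
    (hw : ∀ k : ℕ, n0 ≤ k → k ≤ n → ‖w k - wstar‖ ≤ u k) :
    ‖∑ k ∈ Finset.Icc (n0 + 1) n,
        app (Mprod X1 (steps α) (k + 1) n *
              ((steps α k / steps β k) • (1 : Matrix (Fin d) (Fin d) ℝ) -
                (steps α (k - 1) / steps β (k - 1)) •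
                  ((1 : Matrix (Fin d) (Fin d) ℝ) - steps α k • X1)) *
              (W1 * W2⁻¹))
          (w k - wstar)‖ ≤
      2 * Real.exp (q1 / 2) / q1 *
        (opNorm X1 + 2 * (α - β) * (1 + opNorm X1)) *
        opNorm (W1 * W2⁻¹) * Cθ * (steps α n / steps β n) * u n := by
  have hq : 0 < q1 := hq1 ▸ div_pos (hX1.add_transpose.lambdaMin_pos hd) four_pos
  have hCθ1 : 1 ≤ Cθ := one_le_of_opNorm_one_sub_smul_le hd X1 (tendsto_steps_atTop (hβ.trans hβα))
    fun k => by
      simpa only [Finset.Icc_self, Finset.prod_singleton, Finset.sum_singleton] using hCθ k k le_rfl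
  set K := 2 * Real.exp (q1 / 2) / q1 * (opNorm X1 + 2 * (α - β) * (1 + opNorm X1)) *
    opNorm (W1 * W2⁻¹) * Cθ * (steps α n / steps β n) * u n
  have hK : 0 ≤ K := by
    have := opNorm_nonneg X1
    have := opNorm_nonneg (W1 * W2⁻¹)
    have := steps_pos α n
    have := steps_pos β n
    have := hupos n
    have : 0 ≤ α - β := by linarith
    positivity
  calc _ ≤ ∑ k ∈ Finset.Icc (n0 + 1) n,
          K * (expTail α (q1 / 2) n k - expTail α (q1 / 2) n (k - 1)) := by
        refine (norm_sum_le _ _).trans (Finset.sum_le_sum fun k hk => ?_)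
        obtain ⟨hk0, hkn⟩ := Finset.mem_Icc.mp hk
        obtain ⟨m, rfl⟩ : ∃ m, k = m + 1 := ⟨k - 1, by omega⟩
        exact norm_app_summand_le hd X1 _ hβ.le hβα.le hα.le hq hCθ1 hCθ hupos hmod (by omega) hkn
          (hw _ (by omega) hkn)
    _ = K * (1 - expTail α (q1 / 2) n n0) := by
        rw [← Finset.mul_sum, sum_Icc_sub_pred _ hn, expTail_self]
    _ ≤ K := mul_le_of_le_one_right hK (sub_le_self _ (expTail_pos _ _ _ _).le)

/-- Lemma `Tn bound`.
Let `n ≥ n₀ ≥ 0`, let `u` be a positive sequence that is `α`-moderate from `n₀`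
onwards, and suppose `‖w_k − w*‖ ≤ u_k` for all `n₀ ≤ k ≤ n`.  Then with
`T_{n+1} = Σ_{k=n₀+1}^n (∏_{j=k+1}^n (I − α_j X₁))
  [(α_k/β_k) I − (α_{k−1}/β_{k−1})(I − α_k X₁)] W₁W₂⁻¹ (w_k − w*)` it holds that
`‖T_{n+1}‖ ≤ (2 e^{q₁/2}/q₁) C_U ‖W₁W₂⁻¹‖ C_θ (α_n/β_n) u_n`, where
`C_U = ‖X₁‖ + 2(α−β)(1+‖X₁‖)` and `C_θ` is the constant from the product bound
`∏_{k=i}^n ‖I − α_k X₁‖ ≤ C_θ e^{−q₁ Σ_{k=i}^n α_k}`. -/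
theorem stmt13 {d : ℕ} (hd : 0 < d)
    (X1 W1 W2 : Matrix (Fin d) (Fin d) ℝ)
    (hX1 : PosDefNS X1) (hW2 : PosDefNS W2)
    (α β : ℝ) (hβ : 0 < β) (hβα : β < α) (hα : α < 1)
    (q1 : ℝ) (hq1 : q1 = lambdaMin (X1 + X1ᵀ) / 4)
    (Cθ : ℝ)
    (hCθ : ∀ i n : ℕ, i ≤ n →
      ∏ k ∈ Finset.Icc i n, opNorm (1 - steps α k • X1) ≤
        Cθ * Real.exp (-q1 * ∑ k ∈ Finset.Icc i n, steps α k))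
    (w : ℕ → E d) (wstar : E d)
    (u : ℕ → ℝ) (hupos : ∀ k, 0 < u k)
    (n0 n : ℕ) (hn : n0 ≤ n)
    (hmod : AlphaModerateFrom α β q1 u n0)
    (hw : ∀ k : ℕ, n0 ≤ k → k ≤ n → ‖w k - wstar‖ ≤ u k) :
    ‖∑ k ∈ Finset.Icc (n0 + 1) n,
        app (Mprod X1 (steps α) (k + 1) n *
              ((steps α k / steps β k) • (1 : Matrix (Fin d) (Fin d) ℝ) -
                (steps α (k - 1) / steps β (k - 1)) •
                  ((1 : Matrix (Fin d) (Fin d) ℝ) - steps α k • X1)) *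
              (W1 * W2⁻¹))
          (w k - wstar)‖ ≤
      2 * Real.exp (q1 / 2) / q1 *
        (opNorm X1 + 2 * (α - β) * (1 + opNorm X1)) *
        opNorm (W1 * W2⁻¹) * Cθ * (steps α n / steps β n) * u n :=
  stmt13_general hd X1 W1 W2 hX1 α β hβ hβα hα q1 hq1 Cθ hCθ w wstar u hupos n0 n hn hmod hw
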